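/- Let k ≥ 3 and let P ∈ ℂ[z, z̄] (a polynomial in two commuting variables z and its formal conjugate z̄) be homogeneous of degree k. Suppose that for all integers i, j ≥ 1 with i + j ≤ k − 1, the mixed partial derivative ∂^{i+j} P / ∂z^i ∂z̄^j vanishes identically on the line { z + z̄ = 0 } (i.e., it vanishes at all points (z, −z)). Then there exist a constant λ ∈ ℂ and constants a, b ∈ ℂ such that P(z, z̄) = λ (z + z̄)^k + a z^k + b z̄^k. -/
import Mathlib


open MvPolynomial Finsupp

private lemma fin2_eq (d : Fin 2 →₀ ℕ) : d = single 0 (d 0) + single 1 (d 1) := by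
  ext i; fin_cases i <;> simp

private lemma fin2_degree (d : Fin 2 →₀ ℕ) : Finsupp.degree d = d 0 + d 1 := by
  rw [Finsupp.degree, ← Fin.sum_univ_two (f := fun i => d i)]
  exact Finset.sum_subset (Finset.subset_univ _)
    (fun i _ hi => by simpa [Finsupp.notMem_support_iff] using hi)

private lemma e_apply0 (p q : ℕ) :
    ((single (0 : Fin 2) p + single 1 q : Fin 2 →₀ ℕ)) 0 = p := by simp
private lemma e_apply1 (p q : ℕ) :
    ((single (0 : Fin 2) p + single 1 q : Fin 2 →₀ ℕ)) 1 = q := by simp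

private lemma iter_pderiv_one (m t : ℕ) (a : ℂ) (j : ℕ) :
    (pderiv (1 : Fin 2))^[j] (monomial (single 0 m + single 1 t) a)
      = monomial (single 0 m + single 1 (t - j)) (a * (t.descFactorial j)) := by
  induction j with
  | zero => simp
  | succ n ih =>
    rw [Function.iterate_succ_apply', ih, pderiv_monomial]
    have h1 : (single (0 : Fin 2) m + single 1 (t - n)) - single 1 1
        = single 0 m + single 1 (t - (n + 1)) := by
      ext i; fin_cases i <;> simp <;> omega
    rw [h1, e_apply1]
    congr 1
    rw [Nat.descFactorial_succ]
    push_cast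
    ring

private lemma iter_pderiv_zero (m t : ℕ) (a : ℂ) (j : ℕ) :
    (pderiv (0 : Fin 2))^[j] (monomial (single 0 m + single 1 t) a)
      = monomial (single 0 (m - j) + single 1 t) (a * (m.descFactorial j)) := by
  induction j with
  | zero => simp
  | succ n ih =>
    rw [Function.iterate_succ_apply', ih, pderiv_monomial]
    have h1 : (single (0 : Fin 2) (m - n) + single 1 t) - single 0 1
        = single 0 (m - (n + 1)) + single 1 t := by
      ext i; fin_cases i <;> simp <;> omega
    rw [h1, e_apply0]
    congr 1
    rw [Nat.descFactorial_succ]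
    push_cast
    ring

private lemma iter_pderiv_sum {s : Finset ℕ} (i : Fin 2) (n : ℕ)
    (f : ℕ → MvPolynomial (Fin 2) ℂ) :
    (pderiv i)^[n] (∑ m ∈ s, f m) = ∑ m ∈ s, (pderiv i)^[n] (f m) := by
  induction n with
  | zero => simp
  | succ n ih =>
    rw [Function.iterate_succ_apply', ih, map_sum]
    simp [Function.iterate_succ_apply']

private lemma eval_mon (p q : ℕ) (a : ℂ) (g : Fin 2 → ℂ) :
    eval g (monomial (single (0 : Fin 2) p + single 1 q) a) = a * g 0 ^ p * g 1 ^ q := by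
  rw [eval_monomial, Finsupp.prod]
  set d : Fin 2 →₀ ℕ := single (0 : Fin 2) p + single 1 q with hd
  have h : (∏ i ∈ d.support, g i ^ d i) = ∏ i : Fin 2, g i ^ d i :=
    Finset.prod_subset (Finset.subset_univ _)
      (fun i _ hi => by rw [Finsupp.notMem_support_iff.mp hi, pow_zero])
  rw [h, Fin.prod_univ_two]
  have h0 : d 0 = p := e_apply0 p q
  have h1 : d 1 = q := e_apply1 p q
  rw [h0, h1, mul_assoc]

theorem stmt_12 (k : ℕ) (hk : 3 ≤ k) (P : MvPolynomial (Fin 2) ℂ)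
    (hhom : P.IsHomogeneous k)
    (hvan : ∀ i j : ℕ, 1 ≤ i → 1 ≤ j → i + j ≤ k - 1 →
      ∀ z : ℂ, eval (fun idx : Fin 2 => if idx = 0 then z else -z)
        ((pderiv (0 : Fin 2))^[i] ((pderiv (1 : Fin 2))^[j] P)) = 0) :
    ∃ lam a b : ℂ,
      P = C lam * (X 0 + X 1) ^ k + C a * (X 0 : MvPolynomial (Fin 2) ℂ) ^ k +
        C b * (X 1 : MvPolynomial (Fin 2) ℂ) ^ k := by
  set c : ℕ → ℂ := fun m => coeff (single 0 m + single 1 (k - m)) P with hc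
  -- Step A: P is the sum of its monomials
  have hP : P = ∑ m ∈ Finset.range (k + 1),
      monomial (single 0 m + single 1 (k - m)) (c m) := by
    ext d
    rw [coeff_sum]
    simp only [coeff_monomial]
    by_cases hd : d 0 + d 1 = k
    · rw [Finset.sum_eq_single_of_mem (d 0) (Finset.mem_range.mpr (by omega))]
      · have he : (single (0 : Fin 2) (d 0) + single 1 (k - d 0)) = d := by
          conv_rhs => rw [fin2_eq d]
          congr 1
          congr 1
          omega
        rw [if_pos he, hc]
        exact congrArg (fun e => coeff e P) he.symm
      · intro m _ hm
        rw [if_neg]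
        intro h
        have h1 := DFunLike.congr_fun h 0
        rw [e_apply0] at h1
        exact hm h1
    · have h0 : coeff d P = 0 := hhom.coeff_eq_zero (by rw [fin2_degree]; exact hd)
      rw [h0]
      refine (Finset.sum_eq_zero fun m hm => ?_).symm
      rw [if_neg]
      intro h
      have h1 := DFunLike.congr_fun h 0
      have h2 := DFunLike.congr_fun h 1
      rw [e_apply0] at h1
      rw [e_apply1] at h2
      rw [Finset.mem_range] at hm
      omega
  -- Step C: key relation between consecutive coefficients
  have hstep : ∀ i : ℕ, 1 ≤ i → i ≤ k - 2 →
      c (i + 1) * ((i : ℂ) + 1) = c i * ((k - i : ℕ) : ℂ) := by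
    intro i hi1 hi2
    set j : ℕ := k - 1 - i with hj
    have hj1 : 1 ≤ j := by omega
    have hij : i + j ≤ k - 1 := by omega
    have hv := hvan i j hi1 hj1 hij 1
    rw [hP, iter_pderiv_sum, iter_pderiv_sum] at hv
    simp only [iter_pderiv_one, iter_pderiv_zero] at hv
    rw [map_sum] at hv
    simp only [eval_mon] at hv
    have hg0 : (if (0 : Fin 2) = 0 then (1 : ℂ) else -1) = 1 := by norm_num
    have hg1 : (if (1 : Fin 2) = 0 then (1 : ℂ) else -1) = -1 := by norm_num
    simp only [hg0, hg1, one_pow, one_mul] at hv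
    -- only m = i and m = i+1 contribute
    have hsub : ({i, i + 1} : Finset ℕ) ⊆ Finset.range (k + 1) := by
      intro x hx
      simp only [Finset.mem_insert, Finset.mem_singleton] at hx
      rw [Finset.mem_range]; omega
    rw [← Finset.sum_subset hsub (fun m hm hm2 => ?_)] at hv
    · rw [Finset.sum_pair (by omega : i ≠ i + 1)] at hv
      have e1 : k - i - j = 1 := by omega
      have e2 : k - (i + 1) - j = 0 := by omega
      have hki : k - i = j + 1 := by omega
      have hki' : k - (i + 1) = j := by omega
      have e3 : (k - i).descFactorial j = (j + 1).factorial := by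
        rw [hki]
        have := Nat.factorial_mul_descFactorial (show j ≤ j + 1 by omega)
        simp only [Nat.add_sub_cancel_left, Nat.factorial_one] at this
        omega
      have e4 : (k - (i + 1)).descFactorial j = j.factorial := by
        rw [hki', Nat.descFactorial_self]
      have e5 : i.descFactorial i = i.factorial := Nat.descFactorial_self i
      have e6 : (i + 1).descFactorial i = (i + 1).factorial := by
        have := Nat.factorial_mul_descFactorial (show i ≤ i + 1 by omega)
        simp only [Nat.add_sub_cancel_left, Nat.factorial_one] at this
        omega
      rw [e1, e2, e3, e4, e5, e6] at hv
      norm_num at hv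
      -- hv : c (i+1) * j! * (i+1)! = c i * (j+1)! * i!   (roughly)
      have hfac : ((i.factorial : ℂ) * (j.factorial : ℂ)) ≠ 0 :=
        mul_ne_zero (Nat.cast_ne_zero.mpr i.factorial_ne_zero)
          (Nat.cast_ne_zero.mpr j.factorial_ne_zero)
      rw [hki]
      push_cast
      apply mul_right_cancel₀ hfac
      have hi1' : ((i + 1).factorial : ℂ) = ((i : ℂ) + 1) * i.factorial := by
        rw [Nat.factorial_succ]; push_cast; ring
      have hj1' : ((j + 1).factorial : ℂ) = ((j : ℂ) + 1) * j.factorial := by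
        rw [Nat.factorial_succ]; push_cast; ring
      rw [hi1', hj1'] at hv
      linear_combination hv
    · -- terms outside {i, i+1} vanish
      simp only [Finset.mem_insert, Finset.mem_singleton, not_or] at hm2
      rw [Finset.mem_range] at hm
      rcases lt_or_gt_of_ne hm2.1 with h | h
      · have : m.descFactorial i = 0 := Nat.descFactorial_of_lt h
        rw [this]
        push_cast
        ring
      · have : (k - m).descFactorial j = 0 := Nat.descFactorial_of_lt (by omega)
        rw [this]
        push_cast
        ring
  -- Step C3: c m * k = c 1 * choose k m for 1 ≤ m ≤ k-1
  have hkne : ((k : ℂ)) ≠ 0 := Nat.cast_ne_zero.mpr (by omega)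
  have hchoose : ∀ m : ℕ, 1 ≤ m → m ≤ k - 1 → c m * (k : ℂ) = c 1 * (k.choose m : ℂ) := by
    intro m hm1
    induction m, hm1 using Nat.le_induction with
    | base => intro _; rw [Nat.choose_one_right]
    | succ m hm ih =>
      intro hmk
      have hrel := hstep m hm (by omega)
      have ihm := ih (by omega)
      have hcanc : ((m : ℂ) + 1) ≠ 0 := by
        have : ((m : ℂ) + 1) = ((m + 1 : ℕ) : ℂ) := by push_cast; ring
        rw [this]
        exact Nat.cast_ne_zero.mpr (by omega)
      apply mul_right_cancel₀ hcanc
      have hch : (k.choose (m + 1)) * (m + 1) = k.choose m * (k - m) :=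
        Nat.choose_succ_right_eq k m
      have hch' : ((k.choose (m + 1) : ℂ)) * ((m : ℂ) + 1)
          = (k.choose m : ℂ) * ((k - m : ℕ) : ℂ) := by
        have := congrArg (fun n : ℕ => (n : ℂ)) hch
        push_cast at this
        push_cast
        linear_combination this
      calc c (m + 1) * (k : ℂ) * ((m : ℂ) + 1)
          = (c (m + 1) * ((m : ℂ) + 1)) * (k : ℂ) := by ring
        _ = (c m * ((k - m : ℕ) : ℂ)) * (k : ℂ) := by rw [hrel]
        _ = (c m * (k : ℂ)) * ((k - m : ℕ) : ℂ) := by ring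
        _ = (c 1 * (k.choose m : ℂ)) * ((k - m : ℕ) : ℂ) := by rw [ihm]
        _ = c 1 * ((k.choose m : ℂ) * ((k - m : ℕ) : ℂ)) := by ring
        _ = c 1 * ((k.choose (m + 1) : ℂ) * ((m : ℂ) + 1)) := by rw [hch']
        _ = c 1 * (k.choose (m + 1) : ℂ) * ((m : ℂ) + 1) := by ring
  -- Step D: assemble
  set lam : ℂ := c 1 / k with hlam
  refine ⟨lam, c k - lam, c 0 - lam, ?_⟩
  have hcm : ∀ m : ℕ, 1 ≤ m → m ≤ k - 1 → c m = lam * (k.choose m : ℂ) := by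
    intro m h1 h2
    have h2' := hchoose m h1 h2
    rw [hlam, div_mul_eq_mul_div, eq_div_iff hkne]
    linear_combination h2'
  -- expand RHS
  have hX : ((X 0 + X 1 : MvPolynomial (Fin 2) ℂ)) ^ k
      = ∑ m ∈ Finset.range (k + 1),
        monomial (single 0 m + single 1 (k - m)) ((k.choose m : ℂ)) := by
    rw [add_pow]
    refine Finset.sum_congr rfl fun m hm => ?_
    rw [X_pow_eq_monomial, X_pow_eq_monomial]
    rw [monomial_mul]
    have : ((k.choose m : ℕ) : MvPolynomial (Fin 2) ℂ) = C ((k.choose m : ℂ)) := by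
      simp
    rw [this, mul_comm, C_mul_monomial]
    norm_num
  rw [hP, hX, Finset.mul_sum]
  simp only [C_mul_monomial]
  have hXa : (C (c k - lam) : MvPolynomial (Fin 2) ℂ) * X 0 ^ k
      = monomial (single 0 k + single 1 (k - k)) (c k - lam) := by
    rw [X_pow_eq_monomial, C_mul_monomial, mul_one]
    congr 1
    simp
  have hXb : (C (c 0 - lam) : MvPolynomial (Fin 2) ℂ) * X 1 ^ k
      = monomial (single 0 0 + single 1 (k - 0)) (c 0 - lam) := by
    rw [X_pow_eq_monomial, C_mul_monomial, mul_one]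
    congr 1
    simp
  rw [hXa, hXb]
  have ha : (monomial (single (0:Fin 2) k + single 1 (k - k)) (c k - lam))
      = ∑ m ∈ Finset.range (k + 1),
        monomial (single 0 m + single 1 (k - m)) (if m = k then c k - lam else 0) := by
    rw [Finset.sum_eq_single_of_mem k (Finset.mem_range.mpr (by omega))]
    · rw [if_pos rfl]
    · intro m _ hm
      rw [if_neg hm, monomial_zero]
  have hb : (monomial (single (0:Fin 2) 0 + single 1 (k - 0)) (c 0 - lam))
      = ∑ m ∈ Finset.range (k + 1),
        monomial (single 0 m + single 1 (k - m)) (if m = 0 then c 0 - lam else 0) := by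
    rw [Finset.sum_eq_single_of_mem 0 (Finset.mem_range.mpr (by omega))]
    · rw [if_pos rfl]
    · intro m _ hm
      rw [if_neg hm, monomial_zero]
  rw [ha, hb, ← Finset.sum_add_distrib, ← Finset.sum_add_distrib]
  refine Finset.sum_congr rfl fun m hm => ?_
  rw [← map_add, ← map_add]
  congr 1
  rw [Finset.mem_range] at hm
  by_cases h0 : m = 0
  · subst h0
    rw [if_neg (by omega), if_pos rfl]
    simp [Nat.choose_zero_right]
  · by_cases hkk : m = k
    · subst hkk
      rw [if_pos rfl, if_neg h0]
      simp [Nat.choose_self]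
    · rw [if_neg hkk, if_neg h0, add_zero, add_zero]
      exact hcm m (by omega) (by omega)
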